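/- Let Z : ℝ → {1,...,N} be a quantizer for a K-PAM Gaussian channel whose quantization regions are determined by N-1 polynomial constraints of degree at most K-1 in the variable φ = e^{dgy} (each region being the intersection of the solution sets of these constraints). Then the number of disjoint maximal intervals mapped to any single quantized output is at most (N-1)⌊(K-1)/2⌋ + 1. -/

import Mathlib

/-!
A point set `S ⊆ ℝ` whose increasing samples in `S` never straddle more than `c` gaps of `S`
has at most `c + 1` connected components. For a single constraint
`0 ≤ p(e^{dgy})` with `deg p ≤ K - 1`, each straddled gap forces a sign pattern `+ - +` of `p`,
hence two roots between consecutive sample points, so there are at most `⌊(K - 1)/2⌋` gaps.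
A gap of an intersection of `N - 1` such sets is a gap of one of them, which gives
`(N - 1)⌊(K - 1)/2⌋` gaps and the claimed number of intervals.
-/

open Polynomial Set Function Topology
open scoped Finset

open Classical in
noncomputable def gapIndices {k : ℕ} (S : Set ℝ) (x : Fin (k + 1) → ℝ) : Finset (Fin k) :=
  {i | ∃ t ∈ Ioo (x i.castSucc) (x i.succ), t ∉ S}

def HasAtMostGaps (S : Set ℝ) (c : ℕ) : Prop :=
  ∀ k (x : Fin (k + 1) → ℝ), StrictMono x → (∀ i, x i ∈ S) → #(gapIndices S x) ≤ c

lemma mem_gapIndices {k : ℕ} {S : Set ℝ} {x : Fin (k + 1) → ℝ} {i : Fin k} :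
    i ∈ gapIndices S x ↔ ∃ t ∈ Ioo (x i.castSucc) (x i.succ), t ∉ S := by
  simp [gapIndices]

lemma lt_of_mem_Ioo_castSucc_succ {k : ℕ} {x : Fin (k + 1) → ℝ} (hx : Monotone x)
    {i j : Fin k} (hij : i < j) {a b : ℝ} (ha : a ∈ Ioo (x i.castSucc) (x i.succ))
    (hb : b ∈ Ioo (x j.castSucc) (x j.succ)) : a < b :=
  ha.2.trans ((hx (Fin.succ_le_castSucc_iff.2 hij)).trans_lt hb.1)

namespace HasAtMostGaps

variable {S : Set ℝ} {c : ℕ}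

lemma mono {d : ℕ} (h : HasAtMostGaps S c) (hcd : c ≤ d) : HasAtMostGaps S d :=
  fun k x hx hxS => (h k x hx hxS).trans hcd

lemma biInter {ι : Type*} {J : Finset ι} {T : ι → Set ℝ} {c : ι → ℕ}
    (h : ∀ j ∈ J, HasAtMostGaps (T j) (c j)) :
    HasAtMostGaps (⋂ j ∈ J, T j) (∑ j ∈ J, c j) := by
  intro k x hx hxS
  have hsub : gapIndices (⋂ j ∈ J, T j) x ⊆ J.biUnion fun j => gapIndices (T j) x := by
    intro i hi
    obtain ⟨t, ht, htS⟩ := mem_gapIndices.1 hi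
    obtain ⟨j, hj, htj⟩ : ∃ j ∈ J, t ∉ T j := by simpa using htS
    exact Finset.mem_biUnion.2 ⟨j, hj, mem_gapIndices.2 ⟨t, ht, htj⟩⟩
  calc #(gapIndices (⋂ j ∈ J, T j) x)
      ≤ ∑ j ∈ J, #(gapIndices (T j) x) := (Finset.card_le_card hsub).trans Finset.card_biUnion_le
    _ ≤ ∑ j ∈ J, c j :=
        Finset.sum_le_sum fun j hj => h j hj k x hx fun i => mem_iInter₂.1 (hxS i) j hj

-- Sorted, the points of `R` lie in distinct components, so every consecutive pair straddles a gap.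
lemma card_le_of_injOn_connectedComponentIn (h : HasAtMostGaps S c) {R : Finset ℝ}
    (hRS : ↑R ⊆ S) (hR : InjOn (connectedComponentIn S) R) : #R ≤ c + 1 := by
  obtain hR0 | ⟨k, hk⟩ : #R = 0 ∨ ∃ k, #R = k + 1 := by cases #R <;> simp
  · omega
  set x := R.orderEmbOfFin hk
  have hxR : ∀ i, x i ∈ R := R.orderEmbOfFin_mem hk
  have hgaps : gapIndices S x = Finset.univ := by
    refine Finset.eq_univ_of_forall fun i => mem_gapIndices.2 ?_
    by_contra! hno
    have hIcc : Icc (x i.castSucc) (x i.succ) ⊆ S := by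
      intro t ht
      rcases ht.1.eq_or_lt with rfl | h₁
      · exact hRS (hxR _)
      rcases ht.2.eq_or_lt with rfl | h₂
      · exact hRS (hxR _)
      exact hno t ⟨h₁, h₂⟩
    have hsame := connectedComponentIn_eq <| isPreconnected_Icc.subset_connectedComponentIn
      (left_mem_Icc.2 (x.monotone (Fin.castSucc_le_succ i))) hIcc
      (right_mem_Icc.2 (x.monotone (Fin.castSucc_le_succ i)))
    exact (Fin.castSucc_lt_succ (i := i)).ne (x.injective (hR (hxR _) (hxR _) hsame))
  have := h k x x.strictMono fun i => hRS (hxR i)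
  rw [hgaps, Finset.card_univ, Fintype.card_fin] at this
  omega

lemma exists_ordConnected_partition (h : HasAtMostGaps S c) :
    ∃ m ≤ c + 1, ∃ I : Fin m → Set ℝ, (∀ j, (I j).OrdConnected) ∧
      (Pairwise fun j j' => Disjoint (I j) (I j')) ∧ S = ⋃ j, I j := by
  obtain ⟨U, hUS, hU, hUimg⟩ :=
    (surjOn_image (connectedComponentIn S) S).exists_subset_injOn_image_eq
  have hUfin : U.Finite := by
    by_contra hinf
    obtain ⟨R, hRU, hR⟩ := Set.Infinite.exists_subset_card_eq hinf (c + 2)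
    have := h.card_le_of_injOn_connectedComponentIn (hRU.trans hUS) (hU.mono hRU)
    omega
  set R := hUfin.toFinset
  have hRU : (↑R : Set ℝ) = U := hUfin.coe_toFinset
  let e := R.equivFin.symm
  refine ⟨#R, h.card_le_of_injOn_connectedComponentIn (hRU ▸ hUS) (hRU ▸ hU),
    fun j => connectedComponentIn S (e j),
    fun j => isPreconnected_connectedComponentIn.ordConnected, fun j j' hjj' => ?_, ?_⟩
  · refine Set.disjoint_left.2 fun y hyj hyj' => hjj' (e.injective (Subtype.ext ?_))
    refine hU (hRU ▸ Finset.mem_coe.2 (e j).2) (hRU ▸ Finset.mem_coe.2 (e j').2) ?_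
    rw [connectedComponentIn_eq hyj, connectedComponentIn_eq hyj']
  · refine Subset.antisymm (fun y hy => ?_)
      (iUnion_subset fun j => connectedComponentIn_subset _ _)
    obtain ⟨r, hrU, hr⟩ : connectedComponentIn S y ∈ connectedComponentIn S '' U :=
      hUimg ▸ mem_image_of_mem _ hy
    refine mem_iUnion.2 ⟨e.symm ⟨r, Finset.mem_coe.1 (hRU ▸ hrU)⟩, ?_⟩
    rw [Equiv.apply_symm_apply, hr]
    exact mem_connectedComponentIn hy

end HasAtMostGaps

lemma hasAtMostGaps_setOf_const (P : Prop) (c : ℕ) : HasAtMostGaps {_y : ℝ | P} c := by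
  intro k x _ hxP
  suffices gapIndices {_y : ℝ | P} x = ∅ by simp [this]
  exact Finset.eq_empty_of_forall_notMem fun i hi =>
    (mem_gapIndices.1 hi).elim fun _ ht => ht.2 (hxP 0)

lemma Polynomial.card_le_natDegree_of_eval_comp_eq_zero {φ : ℝ → ℝ} (hφ : Injective φ)
    {q : ℝ[X]} (hq : q ≠ 0) {Y : Finset ℝ} (hY : ∀ y ∈ Y, q.eval (φ y) = 0) :
    #Y ≤ q.natDegree := by
  rw [← Finset.card_image_of_injective Y hφ]
  refine card_le_degree_of_subset_roots fun r hr => ?_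
  obtain ⟨y, hy, rfl⟩ := Finset.mem_image.1 hr
  exact (mem_roots hq).2 (hY y hy)

lemma Polynomial.two_mul_card_le_natDegree_of_eval_comp_eq_zero {φ : ℝ → ℝ} (hφ : Injective φ)
    {q : ℝ[X]} (hq : q ≠ 0) {k : ℕ} {x : Fin (k + 1) → ℝ} (hx : Monotone x)
    {G : Finset (Fin k)} {a b : Fin k → ℝ}
    (hab : ∀ i ∈ G, x i.castSucc < a i ∧ a i < b i ∧ b i < x i.succ)
    (hqa : ∀ i ∈ G, q.eval (φ (a i)) = 0) (hqb : ∀ i ∈ G, q.eval (φ (b i)) = 0) :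
    2 * #G ≤ q.natDegree := by
  have hpair : ∀ i ∈ G, ∀ y ∈ ({a i, b i} : Finset ℝ), y ∈ Ioo (x i.castSucc) (x i.succ) := by
    intro i hi y hy
    obtain ⟨h₁, h₂, h₃⟩ := hab i hi
    rcases Finset.mem_insert.1 hy with rfl | hy
    · exact ⟨h₁, h₂.trans h₃⟩
    · rw [Finset.mem_singleton.1 hy]
      exact ⟨h₁.trans h₂, h₃⟩
  have hcard : #(G.biUnion fun i => {a i, b i}) = 2 * #G := by
    rw [Finset.card_biUnion, Finset.sum_congr rfl fun i hi => Finset.card_pair (hab i hi).2.1.ne,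
      Finset.sum_const, smul_eq_mul, mul_comm]
    intro i hi j hj hij
    refine Finset.disjoint_left.2 fun y hyi hyj => ?_
    rcases lt_or_gt_of_ne hij with h | h
    · exact (lt_of_mem_Ioo_castSucc_succ hx h (hpair i hi y hyi) (hpair j hj y hyj)).false
    · exact (lt_of_mem_Ioo_castSucc_succ hx h (hpair j hj y hyj) (hpair i hi y hyi)).false
  rw [← hcard]
  refine Polynomial.card_le_natDegree_of_eval_comp_eq_zero hφ hq fun y hy => ?_
  obtain ⟨i, hi, hy⟩ := Finset.mem_biUnion.1 hy
  rcases Finset.mem_insert.1 hy with rfl | hy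
  · exact hqa i hi
  · rw [Finset.mem_singleton.1 hy]
    exact hqb i hi

-- Lifting `p` by a small `ε > 0` turns each gap into a strict sign pattern `+ - +`, so both of
-- its roots lie strictly between the two sample points.
lemma hasAtMostGaps_eval_comp {φ : ℝ → ℝ} (hφc : Continuous φ) (hφ : Injective φ) (p : ℝ[X]) :
    HasAtMostGaps {y | 0 ≤ p.eval (φ y)} (p.natDegree / 2) := by
  intro k x hx hxT
  set G := gapIndices {y | 0 ≤ p.eval (φ y)} x
  have hgap : ∀ i ∈ G, ∃ t ∈ Ioo (x i.castSucc) (x i.succ), p.eval (φ t) < 0 := by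
    intro i hi
    simpa using mem_gapIndices.1 hi
  choose! t ht htneg using hgap
  obtain ⟨ε, hεt, hε⟩ : ∃ ε, (∀ i ∈ G, p.eval (φ (t i)) + ε < 0) ∧ 0 < ε := by
    refine (((Filter.eventually_all_finset G).2 fun i hi => ?_).filter_mono nhdsWithin_le_nhds
      |>.and self_mem_nhdsWithin).exists (f := 𝓝[>] (0 : ℝ))
    exact ((continuous_const_add _).tendsto 0).eventually (gt_mem_nhds (by simpa using htneg i hi))
  set q := p + C ε
  have hq : ∀ y, q.eval y = p.eval y + ε := fun y => by simp [q]
  have hqc : Continuous fun y => q.eval (φ y) := q.continuous.comp hφc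
  have hpos : ∀ j, 0 < q.eval (φ (x j)) := fun j => by
    rw [hq]; linarith [show 0 ≤ p.eval (φ (x j)) from hxT j]
  have hroots : ∀ i ∈ G, ∃ a b, a ∈ Ioo (x i.castSucc) (t i) ∧ b ∈ Ioo (t i) (x i.succ) ∧
      q.eval (φ a) = 0 ∧ q.eval (φ b) = 0 := by
    intro i hi
    have hneg : q.eval (φ (t i)) < 0 := by rw [hq]; exact hεt i hi
    obtain ⟨a, ha, hqa⟩ := intermediate_value_Ioo' (ht i hi).1.le hqc.continuousOn
      ⟨hneg, hpos _⟩
    obtain ⟨b, hb, hqb⟩ := intermediate_value_Ioo (ht i hi).2.le hqc.continuousOn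
      ⟨hneg, hpos _⟩
    exact ⟨a, b, ha, hb, hqa, hqb⟩
  choose! a b ha hb hqa hqb using hroots
  have hq0 : q ≠ 0 := fun h => (hpos 0).ne' (by rw [h, eval_zero])
  have := Polynomial.two_mul_card_le_natDegree_of_eval_comp_eq_zero hφ hq0 hx.monotone
    (fun i hi => ⟨(ha i hi).1, (ha i hi).2.trans (hb i hi).1, (hb i hi).2⟩) hqa hqb
  rw [natDegree_add_C] at this
  exact (Nat.le_div_iff_mul_le two_pos).2 (by omega)

theorem stmt_3 (N K : ℕ) (d g : ℝ)
    (a : Fin K → Fin N → ℝ) (Z : ℝ → Fin N)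
    (hZ : ∀ z : Fin N, {y : ℝ | Z y = z} =
      ⋂ z' ∈ {z' : Fin N | z' ≠ z},
        {y : ℝ | 0 ≤ ∑ i : Fin K, (a i z - a i z') * (Real.exp (d * g * y)) ^ (i : ℕ)}) :
    ∀ z : Fin N, ∃ m : ℕ, m ≤ (N - 1) * ((K - 1) / 2) + 1 ∧
      ∃ I : Fin m → Set ℝ, (∀ j, (I j).OrdConnected) ∧
        (Pairwise fun j j' => Disjoint (I j) (I j')) ∧
        {y : ℝ | Z y = z} = ⋃ j, I j := by
  intro z
  have hconstraint : ∀ z', HasAtMostGaps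
      {y : ℝ | 0 ≤ ∑ i : Fin K, (a i z - a i z') * (Real.exp (d * g * y)) ^ (i : ℕ)}
      ((K - 1) / 2) := by
    intro z'
    set p : ℝ[X] := ∑ i : Fin K, C (a i z - a i z') * X ^ (i : ℕ)
    have hp : ∀ y, p.eval y = ∑ i : Fin K, (a i z - a i z') * y ^ (i : ℕ) := by
      simp [p, eval_finsetSum]
    have hdeg : p.natDegree ≤ K - 1 := natDegree_sum_le_of_forall_le _ _ fun i _ =>
      (natDegree_C_mul_X_pow_le _ _).trans (by omega)
    simp only [← hp]
    rcases eq_or_ne (d * g) 0 with hdg | hdg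
    · simpa only [hdg, zero_mul] using hasAtMostGaps_setOf_const _ _
    · exact (hasAtMostGaps_eval_comp (by fun_prop)
        (Real.exp_injective.comp (mul_right_injective₀ hdg)) p).mono (Nat.div_le_div_right hdeg)
  have hregion : HasAtMostGaps {y : ℝ | Z y = z} ((N - 1) * ((K - 1) / 2)) := by
    have := HasAtMostGaps.biInter (J := Finset.univ.erase z) fun z' _ => hconstraint z'
    rw [Finset.sum_const, Finset.card_erase_of_mem (Finset.mem_univ z), Finset.card_univ,
      Fintype.card_fin, smul_eq_mul] at this
    rw [hZ z]
    simpa only [Finset.mem_erase, Finset.mem_univ, and_true, Set.mem_ofPred_eq] using this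
  exact hregion.exists_ordConnected_partition
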